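/- arXiv:2006.02047 — 4 statements merged into one kernel-verified Lean document; each statement's English description precedes it below -/
import Mathlib

section
/- Let Φ : ℝ^{d_θ+d_ω} → ℝ be C², let b(θ,ω) = b₀(θ,ω) + η b₁(θ,ω) with b₀ = (−∇_θΦ; ∇_ωΦ) and b₁ as in the alternating-update SDE, and let σσ^T = 2β^{−1}·diag(Σ_θ, Σ_ω). Then the infinitesimal generator applied to Φ satisfies: 𝒜Φ(θ,ω) = −‖∇_θΦ‖₂² + ‖∇_ωΦ‖₂² − (η/2)[∇_θΦ^T ∇²_θΦ ∇_θΦ + ∇_ωΦ^T ∇²_ωΦ ∇_ωΦ] + β^{−1} Tr(Σ_θ ∇²_θΦ + Σ_ω ∇²_ωΦ). -/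
open Real Matrix

/-!
The generator applied to `Φ` splits into the drift term `b ⬝ᵥ ∇Φ` and the diffusion term
`½ tr(σσᵀ ∇²Φ)`. The zeroth-order drift gives `-‖∇_θΦ‖² + ‖∇_ωΦ‖²`. In the first-order drift the
two cross terms `∇_θΦᵀ ∇²_{θω}Φ ∇_ωΦ` and `∇_ωΦᵀ ∇²_{ωθ}Φ ∇_θΦ` cancel because the Hessian of a
`C²` function is symmetric. Since `σσᵀ` is block diagonal, only the diagonal Hessian blocks
contribute to the trace.
-/

theorem ContDiffAt.fderiv_fderiv_apply_comm {E F : Type*} [NormedAddCommGroup E] [NormedSpace ℝ E]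
    [NormedAddCommGroup F] [NormedSpace ℝ F] {f : E → F} {x : E} (hf : ContDiffAt ℝ 2 f x)
    (v w : E) :
    fderiv ℝ (fun y => fderiv ℝ f y w) x v = fderiv ℝ (fun y => fderiv ℝ f y v) x w := by
  have hdiff : DifferentiableAt ℝ (fderiv ℝ f) x :=
    (hf.fderiv_right (m := 1) le_rfl).differentiableAt one_ne_zero
  have happly (z : E) : fderiv ℝ (fun y => fderiv ℝ f y z) x = (fderiv ℝ (fderiv ℝ f) x).flip z :=
    fderiv_clm_apply hdiff (differentiableAt_const z) |>.trans (by simp)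
  simpa [happly] using (hf.isSymmSndFDerivAt (by simp)).eq v w

namespace Matrix

variable {m n R : Type*} [Fintype m] [Fintype n]

theorem trace_fromBlocks [AddCommMonoid R] (A : Matrix m m R) (B : Matrix m n R)
    (C : Matrix n m R) (D : Matrix n n R) : (fromBlocks A B C D).trace = A.trace + D.trace := by
  simp [trace, Fintype.sum_sum_type]

theorem trace_fromBlocks_diag_mul [NonUnitalNonAssocSemiring R] (S : Matrix m m R)
    (T : Matrix n n R) (A : Matrix m m R) (B : Matrix m n R) (C : Matrix n m R)
    (D : Matrix n n R) :
    (fromBlocks S 0 0 T * fromBlocks A B C D).trace = (S * A).trace + (T * D).trace := by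
  simp [fromBlocks_multiply, trace_fromBlocks]

theorem sumElim_neg_dotProduct_sumElim [Ring R] (x : m → R) (y : n → R) :
    Sum.elim (-x) y ⬝ᵥ Sum.elim x y = -(∑ i, x i ^ 2) + ∑ j, y j ^ 2 := by
  simp [dotProduct, sq]

theorem fromBlocks_neg_mulVec_sumElim_neg_dotProduct [CommRing R] (A : Matrix m m R)
    (B : Matrix m n R) (D : Matrix n n R) (x : m → R) (y : n → R) :
    fromBlocks A (-B) (-Bᵀ) (-D) *ᵥ Sum.elim (-x) y ⬝ᵥ Sum.elim x y
      = -(x ⬝ᵥ A *ᵥ x) - y ⬝ᵥ D *ᵥ y := by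
  have hcross : Bᵀ *ᵥ x ⬝ᵥ y = B *ᵥ y ⬝ᵥ x := by
    rw [mulVec_transpose, ← dotProduct_mulVec, dotProduct_comm]
  simp only [fromBlocks_mulVec, Function.comp_def, Sum.elim_inl, Sum.elim_inr,
    sumElim_dotProduct_sumElim, neg_mulVec, mulVec_neg, add_dotProduct, neg_dotProduct, neg_neg,
    hcross, dotProduct_comm (A *ᵥ x), dotProduct_comm (D *ᵥ y)]
  ring

end Matrix

theorem stmt_10_general (dθ dω : ℕ) (η β : ℝ)
    (Φ : EuclideanSpace ℝ (Fin dθ ⊕ Fin dω) → ℝ) (hΦ : ContDiff ℝ 2 Φ)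
    -- gradient and Hessian of Φ in coordinates:
    (g : EuclideanSpace ℝ (Fin dθ ⊕ Fin dω) → (Fin dθ ⊕ Fin dω) → ℝ)
    (H : EuclideanSpace ℝ (Fin dθ ⊕ Fin dω) → Matrix (Fin dθ ⊕ Fin dω) (Fin dθ ⊕ Fin dω) ℝ)
    (hH : ∀ u i j, H u i j =
      fderiv ℝ (fun v => fderiv ℝ Φ v (EuclideanSpace.single j 1)) u (EuclideanSpace.single i 1))
    -- Hessian blocks:
    (Hθθ : EuclideanSpace ℝ (Fin dθ ⊕ Fin dω) → Matrix (Fin dθ) (Fin dθ) ℝ)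
    (Hθω : EuclideanSpace ℝ (Fin dθ ⊕ Fin dω) → Matrix (Fin dθ) (Fin dω) ℝ)
    (Hωθ : EuclideanSpace ℝ (Fin dθ ⊕ Fin dω) → Matrix (Fin dω) (Fin dθ) ℝ)
    (Hωω : EuclideanSpace ℝ (Fin dθ ⊕ Fin dω) → Matrix (Fin dω) (Fin dω) ℝ)
    (hHθθ : ∀ u i j, Hθθ u i j = H u (.inl i) (.inl j))
    (hHθω : ∀ u i j, Hθω u i j = H u (.inl i) (.inr j))
    (hHωθ : ∀ u i j, Hωθ u i j = H u (.inr i) (.inl j))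
    (hHωω : ∀ u i j, Hωω u i j = H u (.inr i) (.inr j))
    -- diffusion coefficients:
    (Sθ : EuclideanSpace ℝ (Fin dθ ⊕ Fin dω) → Matrix (Fin dθ) (Fin dθ) ℝ)
    (Sω : EuclideanSpace ℝ (Fin dθ ⊕ Fin dω) → Matrix (Fin dω) (Fin dω) ℝ)
    -- drift:
    (b₀ b₁ b : EuclideanSpace ℝ (Fin dθ ⊕ Fin dω) → (Fin dθ ⊕ Fin dω) → ℝ)
    (hb₀ : ∀ u, b₀ u = Sum.elim (fun i => -(g u (.inl i))) (fun j => g u (.inr j)))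
    (hb₁ : ∀ u, b₁ u = (1/2 : ℝ) •
      ((Matrix.fromBlocks (Hθθ u) (-(Hθω u)) (-(Hωθ u)) (-(Hωω u))).mulVec (b₀ u)))
    (hb : ∀ u, b u = b₀ u + η • b₁ u)
    -- σσᵀ = (2/β)·diag(Sθ, Sω) and the generator applied to Φ:
    (SS : EuclideanSpace ℝ (Fin dθ ⊕ Fin dω) → Matrix (Fin dθ ⊕ Fin dω) (Fin dθ ⊕ Fin dω) ℝ)
    (hSS : ∀ u, SS u = (2 / β) • Matrix.fromBlocks (Sθ u) 0 0 (Sω u))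
    (AΦ : EuclideanSpace ℝ (Fin dθ ⊕ Fin dω) → ℝ)
    (hAΦ : ∀ u, AΦ u = (b u) ⬝ᵥ (g u) + (1/2 : ℝ) * ((SS u) * (H u)).trace) :
    ∀ u, AΦ u =
      -(∑ i, (g u (.inl i)) ^ 2) + (∑ j, (g u (.inr j)) ^ 2)
      - (η / 2) * ((fun i => g u (.inl i)) ⬝ᵥ (Hθθ u).mulVec (fun i => g u (.inl i))
          + (fun j => g u (.inr j)) ⬝ᵥ (Hωω u).mulVec (fun j => g u (.inr j)))
      + (1 / β) * (((Sθ u) * (Hθθ u)).trace + ((Sω u) * (Hωω u)).trace) := by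
  intro u
  set gθ : Fin dθ → ℝ := fun i => g u (.inl i)
  set gω : Fin dω → ℝ := fun j => g u (.inr j)
  have hg_split : g u = Sum.elim gθ gω := by
    funext i
    cases i <;> rfl
  have hb₀_split : b₀ u = Sum.elim (-gθ) gω := hb₀ u
  have hHωθ_eq : Hωθ u = (Hθω u)ᵀ := by
    ext i j
    rw [transpose_apply, hHωθ, hHθω, hH, hH]
    exact hΦ.contDiffAt.fderiv_fderiv_apply_comm _ _
  have hH_blocks : H u = fromBlocks (Hθθ u) (Hθω u) (Hωθ u) (Hωω u) := by
    ext (i | i) (j | j) <;> simp [hHθθ, hHθω, hHωθ, hHωω]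
  rw [hAΦ, hb, hb₁, hb₀_split, hHωθ_eq, hSS, hH_blocks, hg_split, add_dotProduct,
    smul_dotProduct, smul_dotProduct, sumElim_neg_dotProduct_sumElim,
    fromBlocks_neg_mulVec_sumElim_neg_dotProduct, smul_mul, trace_smul,
    trace_fromBlocks_diag_mul, smul_eq_mul, smul_eq_mul, smul_eq_mul]
  simp only [Sum.elim_inl, Sum.elim_inr]
  ring

/-- explicit form of the infinitesimal generator applied to the loss `Φ`
for the alternating-update GAN SDE. -/
theorem stmt_10 (dθ dω : ℕ) (η β : ℝ) (hη : 0 < η) (hβ : 0 < β)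
    (Φ : EuclideanSpace ℝ (Fin dθ ⊕ Fin dω) → ℝ) (hΦ : ContDiff ℝ 2 Φ)
    -- gradient and Hessian of Φ in coordinates:
    (g : EuclideanSpace ℝ (Fin dθ ⊕ Fin dω) → (Fin dθ ⊕ Fin dω) → ℝ)
    (hg : ∀ u i, g u i = fderiv ℝ Φ u (EuclideanSpace.single i 1))
    (H : EuclideanSpace ℝ (Fin dθ ⊕ Fin dω) → Matrix (Fin dθ ⊕ Fin dω) (Fin dθ ⊕ Fin dω) ℝ)
    (hH : ∀ u i j, H u i j =
      fderiv ℝ (fun v => fderiv ℝ Φ v (EuclideanSpace.single j 1)) u (EuclideanSpace.single i 1))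
    -- Hessian blocks:
    (Hθθ : EuclideanSpace ℝ (Fin dθ ⊕ Fin dω) → Matrix (Fin dθ) (Fin dθ) ℝ)
    (Hθω : EuclideanSpace ℝ (Fin dθ ⊕ Fin dω) → Matrix (Fin dθ) (Fin dω) ℝ)
    (Hωθ : EuclideanSpace ℝ (Fin dθ ⊕ Fin dω) → Matrix (Fin dω) (Fin dθ) ℝ)
    (Hωω : EuclideanSpace ℝ (Fin dθ ⊕ Fin dω) → Matrix (Fin dω) (Fin dω) ℝ)
    (hHθθ : ∀ u i j, Hθθ u i j = H u (.inl i) (.inl j))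
    (hHθω : ∀ u i j, Hθω u i j = H u (.inl i) (.inr j))
    (hHωθ : ∀ u i j, Hωθ u i j = H u (.inr i) (.inl j))
    (hHωω : ∀ u i j, Hωω u i j = H u (.inr i) (.inr j))
    -- diffusion coefficients:
    (Sθ : EuclideanSpace ℝ (Fin dθ ⊕ Fin dω) → Matrix (Fin dθ) (Fin dθ) ℝ)
    (Sω : EuclideanSpace ℝ (Fin dθ ⊕ Fin dω) → Matrix (Fin dω) (Fin dω) ℝ)
    (hSθ : ∀ u, (Sθ u).IsSymm ∧ (Sθ u).PosSemidef)
    (hSω : ∀ u, (Sω u).IsSymm ∧ (Sω u).PosSemidef)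
    -- drift:
    (b₀ b₁ b : EuclideanSpace ℝ (Fin dθ ⊕ Fin dω) → (Fin dθ ⊕ Fin dω) → ℝ)
    (hb₀ : ∀ u, b₀ u = Sum.elim (fun i => -(g u (.inl i))) (fun j => g u (.inr j)))
    (hb₁ : ∀ u, b₁ u = (1/2 : ℝ) •
      ((Matrix.fromBlocks (Hθθ u) (-(Hθω u)) (-(Hωθ u)) (-(Hωω u))).mulVec (b₀ u)))
    (hb : ∀ u, b u = b₀ u + η • b₁ u)
    -- σσᵀ = (2/β)·diag(Sθ, Sω) and the generator applied to Φ: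
    (SS : EuclideanSpace ℝ (Fin dθ ⊕ Fin dω) → Matrix (Fin dθ ⊕ Fin dω) (Fin dθ ⊕ Fin dω) ℝ)
    (hSS : ∀ u, SS u = (2 / β) • Matrix.fromBlocks (Sθ u) 0 0 (Sω u))
    (AΦ : EuclideanSpace ℝ (Fin dθ ⊕ Fin dω) → ℝ)
    (hAΦ : ∀ u, AΦ u = (b u) ⬝ᵥ (g u) + (1/2 : ℝ) * ((SS u) * (H u)).trace) :
    ∀ u, AΦ u =
      -(∑ i, (g u (.inl i)) ^ 2) + (∑ j, (g u (.inr j)) ^ 2)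
      - (η / 2) * ((fun i => g u (.inl i)) ⬝ᵥ (Hθθ u).mulVec (fun i => g u (.inl i))
          + (fun j => g u (.inr j)) ⬝ᵥ (Hωω u).mulVec (fun j => g u (.inr j)))
      + (1 / β) * (((Sθ u) * (Hθθ u)).trace + ((Sω u) * (Hωω u)).trace) :=
  stmt_10_general dθ dω η β Φ hΦ g H hH Hθθ Hθω Hωθ Hωω hHθθ hHθω hHωθ hHωω Sθ Sω b₀ b₁ b hb₀ hb₁ hb
    SS hSS AΦ hAΦ
end

section
/- Fluctuation-dissipation relation for simultaneous-update GAN SDE: if μ* is an invariant measure for the SDE with drift b₀ = (−∇_θΦ; ∇_ωΦ) and σσ^T = 2β^{−1}diag(Σ_θ,Σ_ω), and if E_{μ*}[𝒜₀Φ] = 0 where 𝒜₀f = b₀^T∇f + (1/2)Tr(σσ^T∇²f), then E_{μ*}[‖∇_θΦ(Θ*,𝒲*)‖₂² − ‖∇_ωΦ(Θ*,𝒲*)‖₂²] = β^{−1}E_{μ*}[Tr(Σ_θ(Θ*,𝒲*)∇²_θΦ(Θ*,𝒲*) + Σ_ω(Θ*,𝒲*)∇²_ωΦ(Θ*,𝒲*))].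 -/
open Real Matrix

/-!
Stationarity says `E_μ[𝒜₀Φ] = 0`, and `𝒜₀Φ` is computed pointwise: the drift term is
`b₀ ⬝ ∇Φ = -(‖∇_θΦ‖² - ‖∇_ωΦ‖²)`, and since `σσᵀ` is block diagonal only the diagonal blocks of
`∇²Φ` enter the diffusion term, which becomes `β⁻¹ (Tr(Σ_θ ∇²_θΦ) + Tr(Σ_ω ∇²_ωΦ))`. Integrating
this identity gives the relation.
-/

namespace Matrix

variable {m n R : Type*} [Fintype m] [Fintype n]

theorem trace_fromBlocks_zero₁₂_zero₂₁_mul [NonUnitalNonAssocSemiring R] (A : Matrix m m R)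
    (D : Matrix n n R) (M : Matrix (m ⊕ n) (m ⊕ n) R) :
    (fromBlocks A 0 0 D * M).trace = (A * M.toBlocks₁₁).trace + (D * M.toBlocks₂₂).trace := by
  conv_lhs => rw [← fromBlocks_toBlocks M]
  simp only [fromBlocks_multiply, Matrix.zero_mul, add_zero, zero_add, trace_fromBlocks]

theorem sum_elim_neg_dotProduct_self [CommRing R] (v : m ⊕ n → R) :
    Sum.elim (fun i => -v (.inl i)) (fun j => v (.inr j)) ⬝ᵥ v =
      -((∑ i, v (.inl i) ^ 2) - ∑ j, v (.inr j) ^ 2) := by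
  simp only [dotProduct, Fintype.sum_sum_type, Sum.elim_inl, Sum.elim_inr, neg_mul, sq,
    Finset.sum_neg_distrib]
  ring

end Matrix

theorem MeasureTheory.integral_eq_const_mul_integral_of_integral_neg_add_eq_zero
    {α : Type*} [MeasurableSpace α] {μ : Measure α} {f h : α → ℝ} (c : ℝ)
    (hf : Integrable f μ) (hh : Integrable h μ) (hzero : ∫ x, (-f x + c * h x) ∂μ = 0) :
    ∫ x, f x ∂μ = c * ∫ x, h x ∂μ := by
  rw [integral_add (f := fun x => -f x) hf.neg (hh.const_mul c), integral_neg,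
    integral_const_mul] at hzero
  linarith

theorem stmt_12_general (dθ dω : ℕ) (β : ℝ)
    (g : EuclideanSpace ℝ (Fin dθ ⊕ Fin dω) → (Fin dθ ⊕ Fin dω) → ℝ)
    (H : EuclideanSpace ℝ (Fin dθ ⊕ Fin dω) → Matrix (Fin dθ ⊕ Fin dω) (Fin dθ ⊕ Fin dω) ℝ)
    (Hθθ : EuclideanSpace ℝ (Fin dθ ⊕ Fin dω) → Matrix (Fin dθ) (Fin dθ) ℝ)
    (Hωω : EuclideanSpace ℝ (Fin dθ ⊕ Fin dω) → Matrix (Fin dω) (Fin dω) ℝ)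
    (hHθθ : ∀ u i j, Hθθ u i j = H u (.inl i) (.inl j))
    (hHωω : ∀ u i j, Hωω u i j = H u (.inr i) (.inr j))
    -- diffusion coefficients:
    (Sθ : EuclideanSpace ℝ (Fin dθ ⊕ Fin dω) → Matrix (Fin dθ) (Fin dθ) ℝ)
    (Sω : EuclideanSpace ℝ (Fin dθ ⊕ Fin dω) → Matrix (Fin dω) (Fin dω) ℝ)
    -- drift b₀ = (-∇_θΦ ; ∇_ωΦ) and σσᵀ = (2/β)·diag(Σθ, Σω):
    (b₀ : EuclideanSpace ℝ (Fin dθ ⊕ Fin dω) → (Fin dθ ⊕ Fin dω) → ℝ)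
    (hb₀ : ∀ u, b₀ u = Sum.elim (fun i => -(g u (.inl i))) (fun j => g u (.inr j)))
    (SS : EuclideanSpace ℝ (Fin dθ ⊕ Fin dω) → Matrix (Fin dθ ⊕ Fin dω) (Fin dθ ⊕ Fin dω) ℝ)
    (hSS : ∀ u, SS u = (2 / β) • Matrix.fromBlocks (Sθ u) 0 0 (Sω u))
    -- generator 𝒜₀Φ:
    (A₀Φ : EuclideanSpace ℝ (Fin dθ ⊕ Fin dω) → ℝ)
    (hA₀Φ : ∀ u, A₀Φ u = (b₀ u) ⬝ᵥ (g u) + (1/2 : ℝ) * ((SS u) * (H u)).trace)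
    -- invariant measure and stationarity:
    (μ : MeasureTheory.Measure (EuclideanSpace ℝ (Fin dθ ⊕ Fin dω)))
    (hstat : ∫ u, A₀Φ u ∂μ = 0)
    -- all expectations are assumed finite:
    (hint1 : MeasureTheory.Integrable
      (fun u => (∑ i, (g u (.inl i)) ^ 2) - (∑ j, (g u (.inr j)) ^ 2)) μ)
    (hint2 : MeasureTheory.Integrable
      (fun u => ((Sθ u) * (Hθθ u)).trace + ((Sω u) * (Hωω u)).trace) μ) :
    ∫ u, ((∑ i, (g u (.inl i)) ^ 2) - (∑ j, (g u (.inr j)) ^ 2)) ∂μ =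
      (1 / β) * ∫ u, (((Sθ u) * (Hθθ u)).trace + ((Sω u) * (Hωω u)).trace) ∂μ := by
  refine MeasureTheory.integral_eq_const_mul_integral_of_integral_neg_add_eq_zero _
    hint1 hint2 ?_
  have generator_eq : ∀ u, A₀Φ u =
      -((∑ i, (g u (.inl i)) ^ 2) - (∑ j, (g u (.inr j)) ^ 2)) +
        (1 / β) * (((Sθ u) * (Hθθ u)).trace + ((Sω u) * (Hωω u)).trace) := by
    intro u
    have hθθ : Hθθ u = (H u).toBlocks₁₁ := Matrix.ext (hHθθ u)
    have hωω : Hωω u = (H u).toBlocks₂₂ := Matrix.ext (hHωω u)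
    rw [hA₀Φ, hb₀, sum_elim_neg_dotProduct_self, hSS, Matrix.smul_mul, trace_smul,
      trace_fromBlocks_zero₁₂_zero₂₁_mul, hθθ, hωω, smul_eq_mul]
    ring
  simpa only [generator_eq] using hstat

/-- fluctuation-dissipation relation for the simultaneous-update GAN SDE. -/
theorem stmt_12 (dθ dω : ℕ) (β : ℝ) (hβ : 0 < β)
    (Φ : EuclideanSpace ℝ (Fin dθ ⊕ Fin dω) → ℝ) (hΦ : ContDiff ℝ 2 Φ)
    (g : EuclideanSpace ℝ (Fin dθ ⊕ Fin dω) → (Fin dθ ⊕ Fin dω) → ℝ)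
    (hg : ∀ u i, g u i = fderiv ℝ Φ u (EuclideanSpace.single i 1))
    (H : EuclideanSpace ℝ (Fin dθ ⊕ Fin dω) → Matrix (Fin dθ ⊕ Fin dω) (Fin dθ ⊕ Fin dω) ℝ)
    (hH : ∀ u i j, H u i j =
      fderiv ℝ (fun v => fderiv ℝ Φ v (EuclideanSpace.single j 1)) u (EuclideanSpace.single i 1))
    (Hθθ : EuclideanSpace ℝ (Fin dθ ⊕ Fin dω) → Matrix (Fin dθ) (Fin dθ) ℝ)
    (Hωω : EuclideanSpace ℝ (Fin dθ ⊕ Fin dω) → Matrix (Fin dω) (Fin dω) ℝ)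
    (hHθθ : ∀ u i j, Hθθ u i j = H u (.inl i) (.inl j))
    (hHωω : ∀ u i j, Hωω u i j = H u (.inr i) (.inr j))
    -- diffusion coefficients:
    (Sθ : EuclideanSpace ℝ (Fin dθ ⊕ Fin dω) → Matrix (Fin dθ) (Fin dθ) ℝ)
    (Sω : EuclideanSpace ℝ (Fin dθ ⊕ Fin dω) → Matrix (Fin dω) (Fin dω) ℝ)
    (hSθ : ∀ u, (Sθ u).IsSymm ∧ (Sθ u).PosSemidef)
    (hSω : ∀ u, (Sω u).IsSymm ∧ (Sω u).PosSemidef)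
    -- drift b₀ = (-∇_θΦ ; ∇_ωΦ) and σσᵀ = (2/β)·diag(Σθ, Σω):
    (b₀ : EuclideanSpace ℝ (Fin dθ ⊕ Fin dω) → (Fin dθ ⊕ Fin dω) → ℝ)
    (hb₀ : ∀ u, b₀ u = Sum.elim (fun i => -(g u (.inl i))) (fun j => g u (.inr j)))
    (SS : EuclideanSpace ℝ (Fin dθ ⊕ Fin dω) → Matrix (Fin dθ ⊕ Fin dω) (Fin dθ ⊕ Fin dω) ℝ)
    (hSS : ∀ u, SS u = (2 / β) • Matrix.fromBlocks (Sθ u) 0 0 (Sω u))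
    -- generator 𝒜₀Φ:
    (A₀Φ : EuclideanSpace ℝ (Fin dθ ⊕ Fin dω) → ℝ)
    (hA₀Φ : ∀ u, A₀Φ u = (b₀ u) ⬝ᵥ (g u) + (1/2 : ℝ) * ((SS u) * (H u)).trace)
    -- invariant measure and stationarity:
    (μ : MeasureTheory.Measure (EuclideanSpace ℝ (Fin dθ ⊕ Fin dω)))
    [MeasureTheory.IsProbabilityMeasure μ]
    (hstat : ∫ u, A₀Φ u ∂μ = 0)
    -- all expectations are assumed finite:
    (hint1 : MeasureTheory.Integrable
      (fun u => (∑ i, (g u (.inl i)) ^ 2) - (∑ j, (g u (.inr j)) ^ 2)) μ)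
    (hint2 : MeasureTheory.Integrable
      (fun u => ((Sθ u) * (Hθθ u)).trace + ((Sω u) * (Hωω u)).trace) μ) :
    ∫ u, ((∑ i, (g u (.inl i)) ^ 2) - (∑ j, (g u (.inr j)) ^ 2)) ∂μ =
      (1 / β) * ∫ u, (((Sθ u) * (Hθθ u)).trace + ((Sω u) * (Hωω u)).trace) ∂μ :=
  stmt_12_general dθ dω β g H Hθθ Hωω hHθθ hHωω Sθ Sω b₀ hb₀ SS hSS A₀Φ hA₀Φ μ hstat hint1 hint2
end

section
/- Second FDR: if μ* is an invariant measure for the SDE with drift b₀ = (−∇_θΦ; ∇_ωΦ) and σσ^T = 2β^{−1}diag(Σ_θ,Σ_ω), and if E_{μ*}[𝒜₀ V] = 0 for V(θ,ω) = ‖θ‖₂² + ‖ω‖₂², then E_{μ*}[Θ*^T∇_θΦ(Θ*,𝒲*) − 𝒲*^T∇_ωΦ(Θ*,𝒲*)] = β^{−1}E_{μ*}[Tr(Σ_θ(Θ*,𝒲*) + Σ_ω(Θ*,𝒲*))]. -/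
open Real Matrix

/-- second fluctuation-dissipation relation (FDR2), obtained from
stationarity applied to `V(θ,ω) = ‖θ‖² + ‖ω‖²`. -/
theorem stmt_13 (dθ dω : ℕ) (β : ℝ) (hβ : 0 < β)
    (Φ : EuclideanSpace ℝ (Fin dθ ⊕ Fin dω) → ℝ) (hΦ : ContDiff ℝ 2 Φ)
    (g : EuclideanSpace ℝ (Fin dθ ⊕ Fin dω) → (Fin dθ ⊕ Fin dω) → ℝ)
    (hg : ∀ u i, g u i = fderiv ℝ Φ u (EuclideanSpace.single i 1))
    -- diffusion coefficients:
    (Sθ : EuclideanSpace ℝ (Fin dθ ⊕ Fin dω) → Matrix (Fin dθ) (Fin dθ) ℝ)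
    (Sω : EuclideanSpace ℝ (Fin dθ ⊕ Fin dω) → Matrix (Fin dω) (Fin dω) ℝ)
    (hSθ : ∀ u, (Sθ u).IsSymm ∧ (Sθ u).PosSemidef)
    (hSω : ∀ u, (Sω u).IsSymm ∧ (Sω u).PosSemidef)
    -- drift b₀ = (-∇_θΦ ; ∇_ωΦ) and σσᵀ = (2/β)·diag(Σθ, Σω):
    (b₀ : EuclideanSpace ℝ (Fin dθ ⊕ Fin dω) → (Fin dθ ⊕ Fin dω) → ℝ)
    (hb₀ : ∀ u, b₀ u = Sum.elim (fun i => -(g u (.inl i))) (fun j => g u (.inr j)))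
    (SS : EuclideanSpace ℝ (Fin dθ ⊕ Fin dω) → Matrix (Fin dθ ⊕ Fin dω) (Fin dθ ⊕ Fin dω) ℝ)
    (hSS : ∀ u, SS u = (2 / β) • Matrix.fromBlocks (Sθ u) 0 0 (Sω u))
    -- generator applied to V, using ∇V(u) = 2u and ∇²V = 2I:
    (A₀V : EuclideanSpace ℝ (Fin dθ ⊕ Fin dω) → ℝ)
    (hA₀V : ∀ u, A₀V u = (b₀ u) ⬝ᵥ (fun i => 2 * u i)
      + (1/2 : ℝ) * ((SS u) * ((2 : ℝ) • (1 : Matrix (Fin dθ ⊕ Fin dω) (Fin dθ ⊕ Fin dω) ℝ))).trace)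
    -- invariant measure and stationarity:
    (μ : MeasureTheory.Measure (EuclideanSpace ℝ (Fin dθ ⊕ Fin dω)))
    [MeasureTheory.IsProbabilityMeasure μ]
    (hstat : ∫ u, A₀V u ∂μ = 0)
    -- all expectations are assumed finite:
    (hint1 : MeasureTheory.Integrable
      (fun u => (∑ i, u (.inl i) * g u (.inl i)) - (∑ j, u (.inr j) * g u (.inr j))) μ)
    (hint2 : MeasureTheory.Integrable (fun u => (Sθ u).trace + (Sω u).trace) μ) :
    ∫ u, ((∑ i, u (.inl i) * g u (.inl i)) - (∑ j, u (.inr j) * g u (.inr j))) ∂μ =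
      (1 / β) * ∫ u, ((Sθ u).trace + (Sω u).trace) ∂μ := by
  have key : ∀ u, A₀V u =
      (-2) * ((∑ i, u (.inl i) * g u (.inl i)) - (∑ j, u (.inr j) * g u (.inr j)))
      + (2 / β) * ((Sθ u).trace + (Sω u).trace) := by
      intro u
      rw [hA₀V u, hb₀ u, hSS u]
      have htr : (Matrix.fromBlocks (Sθ u) 0 0 (Sω u)).trace
          = (Sθ u).trace + (Sω u).trace := by
        simp [Matrix.trace, Matrix.diag, Fintype.sum_sum_type]
      simp only [Matrix.mul_smul, Matrix.mul_one, Matrix.smul_mul, Matrix.trace_smul,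
        smul_smul, smul_eq_mul, htr, dotProduct, Fintype.sum_sum_type,
        Sum.elim_inl, Sum.elim_inr]
      have h1 : ∑ x : Fin dθ, -g u (Sum.inl x) * (2 * u (Sum.inl x))
          = -2 * ∑ x : Fin dθ, u (Sum.inl x) * g u (Sum.inl x) := by
        rw [Finset.mul_sum]; exact Finset.sum_congr rfl fun x _ => by ring
      have h2 : ∑ x : Fin dω, g u (Sum.inr x) * (2 * u (Sum.inr x))
          = 2 * ∑ x : Fin dω, u (Sum.inr x) * g u (Sum.inr x) := by
        rw [Finset.mul_sum]; exact Finset.sum_congr rfl fun x _ => by ring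
      rw [h1, h2]; ring
  have hfun : (fun u => A₀V u) =
      (fun u => (-2) * ((∑ i, u (.inl i) * g u (.inl i)) - (∑ j, u (.inr j) * g u (.inr j)))
        + (2 / β) * ((Sθ u).trace + (Sω u).trace)) := funext key
  rw [hfun, MeasureTheory.integral_add (hint1.const_mul _) (hint2.const_mul _),
    MeasureTheory.integral_const_mul, MeasureTheory.integral_const_mul] at hstat
  have hβ' : (β : ℝ) ≠ 0 := ne_of_gt hβ
  field_simp at hstat ⊢
  linarith
end

section
/- Lyapunov generator bound: let b, σ be functions on ℝ^d with ‖σ(u)‖_F ≤ K for all u and u^T b(u) ≤ −l‖u‖₂ whenever ‖u‖₂ ≥ M₀, where K, l, M₀ > 0. For δ, ε > 0 define V(t,u) = exp(δt + ε‖u‖₂) and the operator ℒV(t,u) = V(t,u)[ε u^T b(u)/‖u‖₂ + δ + (1/2)Tr(σ(u)σ(u)^T (ε‖u‖₂²I + (ε²‖u‖₂ − ε)uu^T)/‖u‖₂³)]. Then for ‖u‖₂ > M₀: ℒV(t,u) ≤ V(t,u)[δ + K²ε²/2 − (l − K²/(2‖u‖₂))ε]. -/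
open Real Matrix
open scoped RealInnerProductSpace

set_option maxHeartbeats 1000000 in
/-- bound on the Lyapunov operator applied to `V(t,u) = exp(δt + ε‖u‖)`. -/
theorem stmt_14 (d : ℕ) (K l M₀ δ ε : ℝ)
    (hK : 0 < K) (hl : 0 < l) (hM₀ : 0 < M₀) (hδ : 0 < δ) (hε : 0 < ε)
    (b : EuclideanSpace ℝ (Fin d) → EuclideanSpace ℝ (Fin d))
    (σ : EuclideanSpace ℝ (Fin d) → Matrix (Fin d) (Fin d) ℝ)
    -- ‖σ(u)‖_F ≤ K:
    (hσ : ∀ u, Real.sqrt (∑ i, ∑ j, (σ u i j) ^ 2) ≤ K)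
    -- dissipativity:
    (hdiss : ∀ u : EuclideanSpace ℝ (Fin d), M₀ ≤ ‖u‖ → ⟪u, b u⟫ ≤ -l * ‖u‖)
    -- V and the Lyapunov operator:
    (V : ℝ → EuclideanSpace ℝ (Fin d) → ℝ)
    (hV : ∀ t u, V t u = Real.exp (δ * t + ε * ‖u‖))
    (LV : ℝ → EuclideanSpace ℝ (Fin d) → ℝ)
    (hLV : ∀ t u, LV t u = V t u *
      (ε * ⟪u, b u⟫ / ‖u‖ + δ +
        (1/2 : ℝ) * ((σ u * (σ u)ᵀ) *
          ((ε * ‖u‖ ^ 2) • (1 : Matrix (Fin d) (Fin d) ℝ)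
            + (ε ^ 2 * ‖u‖ - ε) • Matrix.vecMulVec (fun i => u i) (fun i => u i))).trace
          / ‖u‖ ^ 3)) :
    ∀ t : ℝ, 0 ≤ t → ∀ u : EuclideanSpace ℝ (Fin d), M₀ < ‖u‖ →
      LV t u ≤ V t u * (δ + K ^ 2 * ε ^ 2 / 2 - (l - K ^ 2 / (2 * ‖u‖)) * ε) := by
  intro t ht u hu
  have hn : (0:ℝ) < ‖u‖ := lt_trans hM₀ hu
  have hV0 : (0:ℝ) < V t u := by rw [hV]; exact Real.exp_pos _
  rw [hLV]
  apply mul_le_mul_of_nonneg_left _ hV0.le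
  set S := σ u with hS
  set v : Fin d → ℝ := fun i => u i with hv
  set n := ‖u‖ with hndef
  set ip := (⟪u, b u⟫ : ℝ) with hip
  have hdiss' : ip ≤ -l * n := hdiss u hu.le
  -- trace of S * Sᵀ
  have hTrA : (S * Sᵀ).trace = ∑ i, ∑ j, S i j ^ 2 := by
    simp [Matrix.trace, Matrix.diag, Matrix.mul_apply, Matrix.transpose_apply, sq]
  have hTrA_nonneg : (0:ℝ) ≤ (S * Sᵀ).trace := by
    rw [hTrA]; positivity
  have hTrA_le : (S * Sᵀ).trace ≤ K ^ 2 := by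
    rw [hTrA]
    have h := hσ u
    rw [← hS] at h
    have h0 : (0:ℝ) ≤ ∑ i, ∑ j, S i j ^ 2 := by positivity
    nlinarith [Real.sq_sqrt h0, Real.sqrt_nonneg (∑ i, ∑ j, S i j ^ 2)]
  -- norm squared
  have hnv : n ^ 2 = ∑ i, v i ^ 2 := by
    rw [hndef, EuclideanSpace.norm_eq, Real.sq_sqrt (by positivity)]
    simp [hv, Real.norm_eq_abs, sq_abs]
  -- trace of S*Sᵀ*vvᵀ
  have hQ : (S * Sᵀ * Matrix.vecMulVec v v).trace = ∑ k, (∑ i, S i k * v i) ^ 2 := by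
    simp only [Matrix.trace, Matrix.diag, Matrix.mul_apply, Matrix.transpose_apply,
      Matrix.vecMulVec_apply]
    calc ∑ i, ∑ j, (∑ k, S i k * S j k) * (v j * v i)
        = ∑ i, ∑ k, ∑ j, (S i k * v i) * (S j k * v j) := by
          refine Finset.sum_congr rfl fun i _ => ?_
          rw [Finset.sum_comm]
          refine Finset.sum_congr rfl fun j _ => ?_
          rw [Finset.sum_mul]
          exact Finset.sum_congr rfl fun k _ => by ring
      _ = ∑ k, ∑ i, ∑ j, (S i k * v i) * (S j k * v j) := Finset.sum_comm
      _ = ∑ k, (∑ i, S i k * v i) ^ 2 := by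
          refine Finset.sum_congr rfl fun k _ => ?_
          rw [sq, Finset.sum_mul_sum]
  have hQ_nonneg : (0:ℝ) ≤ (S * Sᵀ * Matrix.vecMulVec v v).trace := by
    rw [hQ]; positivity
  have hQ_le : (S * Sᵀ * Matrix.vecMulVec v v).trace ≤ (S * Sᵀ).trace * n ^ 2 := by
    rw [hQ, hTrA, hnv]
    calc ∑ k, (∑ i, S i k * v i) ^ 2
        ≤ ∑ k, (∑ i, S i k ^ 2) * (∑ i, v i ^ 2) := by
          refine Finset.sum_le_sum fun k _ => ?_
          exact Finset.sum_mul_sq_le_sq_mul_sq Finset.univ _ _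
      _ = (∑ k, ∑ i, S i k ^ 2) * (∑ i, v i ^ 2) := by rw [Finset.sum_mul]
      _ = (∑ i, ∑ j, S i j ^ 2) * (∑ i, v i ^ 2) := by rw [Finset.sum_comm]
  -- split the trace
  have hsplit : (S * Sᵀ *
      ((ε * n ^ 2) • (1 : Matrix (Fin d) (Fin d) ℝ)
        + (ε ^ 2 * n - ε) • Matrix.vecMulVec v v)).trace
      = (ε * n ^ 2) * (S * Sᵀ).trace
        + (ε ^ 2 * n - ε) * (S * Sᵀ * Matrix.vecMulVec v v).trace := by
    rw [Matrix.mul_add, Matrix.trace_add, Matrix.mul_smul, Matrix.mul_smul,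
      Matrix.trace_smul, Matrix.trace_smul, Matrix.mul_one, smul_eq_mul, smul_eq_mul]
  rw [hsplit]
  set A := (S * Sᵀ).trace with hA
  set Q := (S * Sᵀ * Matrix.vecMulVec v v).trace with hQdef
  clear_value A Q ip n
  clear hsplit hQ hTrA hnv hdiss hLV hV hσ hS hv hA hQdef hip hndef
  -- first term bound
  have h1 : ε * ip / n ≤ -(l * ε) := by
    rw [div_le_iff₀ hn]
    nlinarith
  -- trace bound
  have h2 : (ε * n ^ 2) * A + (ε ^ 2 * n - ε) * Q ≤ K ^ 2 * ε ^ 2 * n ^ 3 + K ^ 2 * ε * n ^ 2 := by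
    nlinarith [mul_le_mul_of_nonneg_left hTrA_le (by positivity : (0:ℝ) ≤ ε * n ^ 2),
      mul_le_mul_of_nonneg_left hQ_le (by positivity : (0:ℝ) ≤ ε ^ 2 * n),
      mul_nonneg hε.le hQ_nonneg,
      mul_le_mul_of_nonneg_left hTrA_le (by positivity : (0:ℝ) ≤ ε ^ 2 * n ^ 3)]
  have h3 : (1/2 : ℝ) * ((ε * n ^ 2) * A + (ε ^ 2 * n - ε) * Q) / n ^ 3
      ≤ K ^ 2 * ε ^ 2 / 2 + K ^ 2 / (2 * n) * ε := by
    rw [div_le_iff₀ (by positivity : (0:ℝ) < n ^ 3)]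
    have heq : (K ^ 2 * ε ^ 2 / 2 + K ^ 2 / (2 * n) * ε) * n ^ 3
        = (1/2 : ℝ) * (K ^ 2 * ε ^ 2 * n ^ 3 + K ^ 2 * ε * n ^ 2) := by
      field_simp
    rw [heq]
    linarith
  linarith
end
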